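/- Let G be an r-SPTG in which all non-final locations are urgent. For every location ℓ and every ν ∈ [0,r], Val_G(ℓ,ν) belongs to Poss_ν ∪ {−∞,+∞}, where Poss_ν = [−(|L|−1)·w_T − w_F, (|L|−1)·w_T + w_F] ∩ Z* and Z* = ℤ + {φ_{ℓ′}(ν) : ℓ′ ∈ L_Fin}; moreover the cardinality of Poss_ν is at most |L_Fin|·(2(|L|−1)·w_T + 2·w_F + 1). -/

import Mathlib

/-!
Formalization of (simple) priced timed games (SPTGs) following
"One-Clock Priced Timed Games with Negative Weights"
(Brihaye, Geeraerts, Haddad, Lefaucheux, Monmege).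
-/

noncomputable section
open scoped Classical

/-- `f` decomposes, on `[a,b]`, into `n` affine pieces with rational slopes and
rational interior cutpoints.  (This entails in particular that `f` is finite and
continuous on `[a,b]`.) -/
def AffinePiecesOn (f : ℝ → EReal) (a b : ℝ) (n : ℕ) : Prop :=
  ∃ c : ℕ → ℝ, c 0 = a ∧ c n = b ∧ (∀ i < n, c i < c (i + 1)) ∧
    (∀ i, 0 < i → i < n → ∃ q : ℚ, c i = (q : ℝ)) ∧
    (∀ i < n, ∃ (m : ℚ) (q : ℝ), ∀ x : ℝ, c i ≤ x → x ≤ c (i + 1) →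
      f x = (((m : ℝ) * x + q : ℝ) : EReal))

/-- A cost function over `[a,b]`: either constantly `+∞`, or constantly `-∞`, or
continuous and piecewise affine with rational slopes and finitely many rational
cutpoints. -/
def CostFunctionOn (f : ℝ → EReal) (a b : ℝ) : Prop :=
  (∀ x : ℝ, a ≤ x → x ≤ b → f x = ⊤) ∨ (∀ x : ℝ, a ≤ x → x ≤ b → f x = ⊥) ∨
    ∃ n : ℕ, AffinePiecesOn f a b n

/-- `x` and `y` lie in the same interval (open interval or singleton) of the
partition of the line induced by the finite set of points `P`. -/
def sameInt (P : Finset ℚ) (x y : ℝ) : Prop :=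
  ∀ p ∈ P, (((p : ℝ) < x) ↔ ((p : ℝ) < y)) ∧ ((x < (p : ℝ)) ↔ (y < (p : ℝ)))

/-- An `r`-SPTG (simple priced timed game). Locations are partitioned into those of
player Min, player Max and the final ones; some non-final locations are urgent;
transitions carry integer weights, non-final locations carry integer rates, final
locations carry affine final cost functions.  The clock stays in `[0,r]`. -/
structure SPTG where
  Loc : Type
  [fintypeLoc : Fintype Loc]
  [decEqLoc : DecidableEq Loc]
  isMin : Loc → Prop
  isMax : Loc → Prop
  isFin : Loc → Prop
  partition : ∀ ℓ, (isMin ℓ ∧ ¬isMax ℓ ∧ ¬isFin ℓ) ∨ (¬isMin ℓ ∧ isMax ℓ ∧ ¬isFin ℓ) ∨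
    (¬isMin ℓ ∧ ¬isMax ℓ ∧ isFin ℓ)
  isUrg : Loc → Prop
  urg_not_fin : ∀ ℓ, isUrg ℓ → ¬isFin ℓ
  trans : Loc → Loc → Prop
  trans_not_fin : ∀ ℓ ℓ', trans ℓ ℓ' → ¬isFin ℓ
  r : ℝ
  r_nonneg : 0 ≤ r
  r_le_one : r ≤ 1
  finSlope : Loc → ℝ
  finIntercept : Loc → ℝ
  locWt : Loc → ℤ
  transWt : Loc → Loc → ℤ

attribute [instance] SPTG.fintypeLoc SPTG.decEqLoc

namespace SPTG

/-- The final cost functions have rational coefficients (this is part of the paper's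
definition of an SPTG). -/
def ratFinal (G : SPTG) : Prop :=
  ∀ ℓ : G.Loc, (∃ a : ℚ, G.finSlope ℓ = (a : ℝ)) ∧ ∃ b : ℚ, G.finIntercept ℓ = (b : ℝ)

/-- The final cost function `φ_ℓ`. -/
def finalCost (G : SPTG) (ℓ : G.Loc) (ν : ℝ) : ℝ := G.finSlope ℓ * ν + G.finIntercept ℓ

/-- A configuration: a location together with a clock value. -/
abbrev Conf (G : SPTG) := G.Loc × ℝ

def validConf (G : SPTG) (s : G.Conf) : Prop := 0 ≤ s.2 ∧ s.2 ≤ G.r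

/-- A move: a delay `t` together with a transition (determined by its target). -/
structure Move (G : SPTG) where
  t : ℝ
  tgt : G.Loc

/-- The move `m` is available from configuration `s`. -/
def canMove (G : SPTG) (s : G.Conf) (m : G.Move) : Prop :=
  0 ≤ m.t ∧ s.2 + m.t ≤ G.r ∧ G.trans s.1 m.tgt ∧ (G.isUrg s.1 → m.t = 0)

/-- Cost `π(δ) + t·π(ℓ)` of a move. -/
def moveCost (G : SPTG) (s : G.Conf) (m : G.Move) : ℝ :=
  (G.transWt s.1 m.tgt : ℝ) + m.t * (G.locWt s.1 : ℝ)

def applyMove (G : SPTG) (s : G.Conf) (m : G.Move) : G.Conf := (m.tgt, s.2 + m.t)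

def deadlock (G : SPTG) (s : G.Conf) : Prop := ¬∃ m : G.Move, G.canMove s m

/-- A finite play is represented by its initial configuration together with the
list of successive moves; `ValidFrom s l` states that all these moves are legal. -/
def ValidFrom (G : SPTG) : G.Conf → List G.Move → Prop
  | _, [] => True
  | s, m :: l => G.canMove s m ∧ ValidFrom G (G.applyMove s m) l

/-- Last configuration of a finite play. -/
def endConf (G : SPTG) (s : G.Conf) (l : List G.Move) : G.Conf := l.foldl G.applyMove s

/-- Sum of the weights of the discrete transitions taken along a finite play. -/
def transWtSum (G : SPTG) : G.Conf → List G.Move → ℤ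
  | _, [] => 0
  | s, m :: l => G.transWt s.1 m.tgt + transWtSum G (G.applyMove s m) l

/-- Price of a finite play: the accumulated costs of its moves, plus the final cost
function evaluated at the last configuration if its location is final. -/
def finPrice (G : SPTG) : G.Conf → List G.Move → ℝ
  | s, [] => if G.isFin s.1 then G.finalCost s.1 s.2 else 0
  | s, m :: l => G.moveCost s m + finPrice G (G.applyMove s m) l

/-- A strategy of Min: it prescribes a legal move to every finite play ending in a
non-deadlock configuration owned by Min. -/
structure MinStrategy (G : SPTG) where
  move : G.Conf → List G.Move → Option G.Move
  legal : ∀ s l, G.validConf s → G.ValidFrom s l → G.isMin (G.endConf s l).1 →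
    ¬G.deadlock (G.endConf s l) → ∃ m, move s l = some m ∧ G.canMove (G.endConf s l) m

/-- A strategy of Max. -/
structure MaxStrategy (G : SPTG) where
  move : G.Conf → List G.Move → Option G.Move
  legal : ∀ s l, G.validConf s → G.ValidFrom s l → G.isMax (G.endConf s l).1 →
    ¬G.deadlock (G.endConf s l) → ∃ m, move s l = some m ∧ G.canMove (G.endConf s l) m

/-- One step of the play induced by a pair of strategies. -/
def step (G : SPTG) (σmin : MinStrategy G) (σmax : MaxStrategy G) (s : G.Conf)
    (l : List G.Move) : List G.Move :=
  if G.deadlock (G.endConf s l) then l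
  else if G.isMin (G.endConf s l).1 then
    match σmin.move s l with
    | some m => l ++ [m]
    | none => l
  else
    match σmax.move s l with
    | some m => l ++ [m]
    | none => l

/-- The successive finite prefixes of the unique play determined by an initial
configuration and a pair of strategies. -/
def hist (G : SPTG) (σmin : MinStrategy G) (σmax : MaxStrategy G) (s : G.Conf) :
    ℕ → List G.Move
  | 0 => []
  | n + 1 => G.step σmin σmax s (hist G σmin σmax s n)

/-- Price of the completed play determined by an initial configuration and a pair of
strategies: the price of the play if it reaches a final location, `+∞` otherwise. -/
def playCost (G : SPTG) (s : G.Conf) (σmin : MinStrategy G) (σmax : MaxStrategy G) :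
    EReal :=
  if h : ∃ n, G.isFin (G.endConf s (G.hist σmin σmax s n)).1 then
    ((G.finPrice s (G.hist σmin σmax s (Nat.find h)) : ℝ) : EReal)
  else ⊤

/-- Upper value. -/
def upperVal (G : SPTG) (s : G.Conf) : EReal :=
  ⨅ σmin : MinStrategy G, ⨆ σmax : MaxStrategy G, G.playCost s σmin σmax

/-- Lower value. -/
def lowerVal (G : SPTG) (s : G.Conf) : EReal :=
  ⨆ σmax : MaxStrategy G, ⨅ σmin : MinStrategy G, G.playCost s σmin σmax

/-- The value of the game (SPTGs are determined). -/
def val (G : SPTG) (ℓ : G.Loc) (ν : ℝ) : EReal := G.upperVal (ℓ, ν)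

/-- The finite play `(s, l)` is consistent with the Min strategy `σ`. -/
def consistentMin (G : SPTG) (σ : MinStrategy G) (s : G.Conf) (l : List G.Move) : Prop :=
  ∀ (l₁ : List G.Move) (m : G.Move) (l₂ : List G.Move), l = l₁ ++ m :: l₂ →
    G.isMin (G.endConf s l₁).1 → σ.move s l₁ = some m

/-- The finite play `(s, l)` is consistent with the Max strategy `σ`. -/
def consistentMax (G : SPTG) (σ : MaxStrategy G) (s : G.Conf) (l : List G.Move) : Prop :=
  ∀ (l₁ : List G.Move) (m : G.Move) (l₂ : List G.Move), l = l₁ ++ m :: l₂ →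
    G.isMax (G.endConf s l₁).1 → σ.move s l₁ = some m

/-- There is an infinite play from `s` consistent with the Min strategy `σ`. -/
def infConsMin (G : SPTG) (σ : MinStrategy G) (s : G.Conf) : Prop :=
  ∃ ρ : ℕ → G.Move, ∀ n : ℕ,
    G.ValidFrom s (List.ofFn fun i : Fin n => ρ i) ∧
    G.consistentMin σ s (List.ofFn fun i : Fin n => ρ i)

/-- `Cost(s, σ_Min)`: the supremum of the prices of the completed plays from `s`
consistent with `σ_Min` (finite completed plays end in a deadlock; they have price
`+∞` unless they end in a final location; infinite plays have price `+∞`). -/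
def minCost (G : SPTG) (σ : MinStrategy G) (s : G.Conf) : EReal :=
  (⨆ l : { l : List G.Move //
      G.ValidFrom s l ∧ G.consistentMin σ s l ∧ G.deadlock (G.endConf s l) },
    if G.isFin (G.endConf s l.1).1 then ((G.finPrice s l.1 : ℝ) : EReal) else ⊤) ⊔
  (if G.infConsMin σ s then (⊤ : EReal) else ⊥)

/-- `Cost(s, σ_Max)`: the infimum of the prices of the completed plays from `s`
consistent with `σ_Max`. -/
def maxCost (G : SPTG) (σ : MaxStrategy G) (s : G.Conf) : EReal :=
  ⨅ l : { l : List G.Move //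
      G.ValidFrom s l ∧ G.consistentMax σ s l ∧ G.deadlock (G.endConf s l) },
    if G.isFin (G.endConf s l.1).1 then ((G.finPrice s l.1 : ℝ) : EReal) else ⊤

/-- A finite positional (FP-)strategy: a memoryless strategy given by a function `f`
of the current configuration, together with, for each location, finitely many
rational endpoints `0 = ν_0 < ν_1 < ⋯ < ν_k = r` (all belonging to `pts`) such that
on each open interval and at each endpoint the strategy plays the same move, which is
either a fixed transition taken immediately or waiting until the next endpoint and
then taking a fixed transition. -/
structure FPStrategy (G : SPTG) where
  f : G.Conf → Option G.Move
  pts : Finset ℚ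
  zero_mem : (0 : ℚ) ∈ pts
  r_mem : ∃ q ∈ pts, (q : ℝ) = G.r
  pts_range : ∀ q ∈ pts, (0 : ℝ) ≤ (q : ℝ) ∧ (q : ℝ) ≤ G.r
  fp : ∀ ℓ : G.Loc, ∃ (k : ℕ) (ν : ℕ → ℚ) (δ : ℕ → G.Loc),
    (∀ i ≤ k, ν i ∈ pts) ∧ ν 0 = 0 ∧ ((ν k : ℝ) = G.r) ∧ (∀ i < k, ν i < ν (i + 1)) ∧
    (∀ i, 1 ≤ i → i ≤ k →
      (∀ x : ℝ, (ν (i - 1) : ℝ) < x → x < (ν i : ℝ) →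
        f (ℓ, x) = some ⟨0, δ (2 * i - 1)⟩) ∨
      (∀ x : ℝ, (ν (i - 1) : ℝ) < x → x < (ν i : ℝ) →
        f (ℓ, x) = some ⟨(ν i : ℝ) - x, δ (2 * i - 1)⟩)) ∧
    (∀ i < k, f (ℓ, (ν i : ℝ)) = some ⟨0, δ (2 * i)⟩ ∨
      f (ℓ, (ν i : ℝ)) = some ⟨(ν (i + 1) : ℝ) - (ν i : ℝ), δ (2 * i)⟩) ∧
    f (ℓ, (ν k : ℝ)) = some ⟨0, δ (2 * k)⟩

namespace FPStrategy

variable {G : SPTG}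

/-- `|σ| = |Int(σ)|`: the number of intervals (singletons and open intervals)
generated by the points of `σ`. -/
def size (σ : FPStrategy G) : ℕ := 2 * σ.pts.card - 1

/-- `σ` prescribes a legal move wherever Min has to play. -/
def legalMin (σ : FPStrategy G) : Prop :=
  ∀ s : G.Conf, G.validConf s → G.isMin s.1 → ¬G.deadlock s →
    ∃ m, σ.f s = some m ∧ G.canMove s m

/-- `σ` prescribes a legal move wherever Max has to play. -/
def legalMax (σ : FPStrategy G) : Prop :=
  ∀ s : G.Conf, G.validConf s → G.isMax s.1 → ¬G.deadlock s →
    ∃ m, σ.f s = some m ∧ G.canMove s m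

/-- The finite play `(s, l)` is consistent with `σ` viewed as a Min strategy. -/
def consMin (σ : FPStrategy G) (s : G.Conf) (l : List G.Move) : Prop :=
  ∀ (l₁ : List G.Move) (m : G.Move) (l₂ : List G.Move), l = l₁ ++ m :: l₂ →
    G.isMin (G.endConf s l₁).1 → σ.f (G.endConf s l₁) = some m

/-- The finite play `(s, l)` is consistent with `σ` viewed as a Max strategy. -/
def consMax (σ : FPStrategy G) (s : G.Conf) (l : List G.Move) : Prop :=
  ∀ (l₁ : List G.Move) (m : G.Move) (l₂ : List G.Move), l = l₁ ++ m :: l₂ →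
    G.isMax (G.endConf s l₁).1 → σ.f (G.endConf s l₁) = some m

/-- An NC-strategy of Min: an FP-strategy such that along every cycle consistent
with it whose endpoints have clock values in the same interval of `Int(σ)`, the sum
of the weights of the discrete transitions is at most `-1`. -/
def isNC (σ : FPStrategy G) : Prop :=
  σ.legalMin ∧
  ∀ (ℓ : G.Loc) (ν : ℝ) (l : List G.Move), l ≠ [] →
    G.ValidFrom (ℓ, ν) l → σ.consMin (ℓ, ν) l → (G.endConf (ℓ, ν) l).1 = ℓ →
    sameInt σ.pts ν (G.endConf (ℓ, ν) l).2 → G.transWtSum (ℓ, ν) l ≤ -1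

/-- The fake value of `σ` from `s`: the supremum of the prices of the plays from `s`
consistent with `σ` that reach a final location (`sup ∅ = -∞`). -/
def fakeVal (σ : FPStrategy G) (s : G.Conf) : EReal :=
  ⨆ l : { l : List G.Move //
      G.ValidFrom s l ∧ σ.consMin s l ∧ G.isFin (G.endConf s l).1 },
    ((G.finPrice s l.1 : ℝ) : EReal)

/-- `Cost(s, σ)` for `σ` viewed as a Max strategy. -/
def maxCost (σ : FPStrategy G) (s : G.Conf) : EReal :=
  ⨅ l : { l : List G.Move //
      G.ValidFrom s l ∧ σ.consMax s l ∧ G.deadlock (G.endConf s l) },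
    if G.isFin (G.endConf s l.1).1 then ((G.finPrice s l.1 : ℝ) : EReal) else ⊤

end FPStrategy

/-- `w_T`: the largest absolute value of a transition weight. -/
def wT (G : SPTG) : ℝ :=
  ⨆ p : G.Loc × G.Loc, if G.trans p.1 p.2 then |(G.transWt p.1 p.2 : ℝ)| else 0

/-- `w_L`: the largest absolute value of a (non-final) location weight. -/
def wL (G : SPTG) : ℝ :=
  ⨆ ℓ : G.Loc, if G.isFin ℓ then 0 else |(G.locWt ℓ : ℝ)|

/-- `w_F`: the largest absolute value of a final cost function on `[0,r]`. -/
def wF (G : SPTG) : ℝ :=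
  ⨆ ℓ : G.Loc, if G.isFin ℓ then max |G.finalCost ℓ 0| |G.finalCost ℓ G.r| else 0

/-- Slope of the value function of location `ℓ` between clock values `ν₁` and `ν₂`. -/
def slope (G : SPTG) (ℓ : G.Loc) (ν₁ ν₂ : ℝ) : ℝ :=
  ((G.val ℓ ν₂).toReal - (G.val ℓ ν₁).toReal) / (ν₂ - ν₁)

/-- A game is finitely optimal if Min has a fake-optimal NC-strategy, Max has an
optimal FP-strategy, and all value functions are cost functions. -/
def finitelyOptimal (G : SPTG) : Prop :=
  (∃ σ : FPStrategy G, σ.isNC ∧ ∀ s : G.Conf, G.validConf s → σ.fakeVal s = G.val s.1 s.2) ∧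
  (∃ σ : FPStrategy G, σ.legalMax ∧ ∀ s : G.Conf, G.validConf s → σ.maxCost s = G.val s.1 s.2) ∧
  ∀ ℓ : G.Loc, CostFunctionOn (G.val ℓ) 0 G.r

end SPTG

namespace SPTG

/-- `Z* = ℤ + {φ_{ℓ'}(ν) : ℓ' ∈ L_Fin}`. -/
def Zstar (G : SPTG) (ν : ℝ) : Set ℝ :=
  {x | ∃ (k : ℤ) (ℓ' : G.Loc), G.isFin ℓ' ∧ x = (k : ℝ) + G.finalCost ℓ' ν}

/-- `Poss_ν = [-(|L|-1)·w_T - w_F, (|L|-1)·w_T + w_F] ∩ Z*`. -/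
def Poss (G : SPTG) (ν : ℝ) : Set ℝ :=
  {x | x ∈ G.Zstar ν ∧
    -(((Fintype.card G.Loc : ℝ) - 1) * G.wT + G.wF) ≤ x ∧
    x ≤ ((Fintype.card G.Loc : ℝ) - 1) * G.wT + G.wF}

end SPTG


/-!
When every non-final location is urgent, no time elapses and the clock stays at `ν`: the game
is a finite turn-based reachability game whose value is the limit of the value iteration that
starts from the final costs (and `+∞` elsewhere) and applies the one-step operator
`bellman`. Min guarantees the `n`-th iterate by playing optimally for `n` steps; Max guarantees
the limit, a fixed point of `bellman`, by a positional strategy greedy for it. All iterates lie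
in `Z* ∪ {+∞}`, which is discrete, so a finite limit is reached at some stage. Following
successors that realise the value strictly decreases that stage, which yields a simple path to
a final location, of at most `|L| - 1` transitions, whose weight plus final cost is the value.
-/

theorem EReal.coe_add_iInf {ι : Sort*} (c : ℝ) (f : ι → EReal) :
    (c : EReal) + ⨅ i, f i = ⨅ i, ((c : EReal) + f i) :=
  Monotone.map_iInf_of_continuousAt
    ((EReal.continuousAt_add (.inl (EReal.coe_ne_top c)) (.inl (EReal.coe_ne_bot c))).comp
      (continuousAt_const.prodMk continuousAt_id))
    (fun _ _ h => add_le_add_right h _) (EReal.coe_add_top c)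

theorem exists_eq_iInf_of_finite_lt {α ι : Type*} [CompleteLinearOrder α] {f : ι → α} {c : α}
    (hc : ⨅ i, f i < c) (hfin : (Set.range f ∩ Set.Iio c).Finite) : ∃ i, f i = ⨅ i, f i := by
  obtain ⟨i₀, hi₀⟩ := iInf_lt_iff.1 hc
  obtain ⟨_, ⟨⟨i, rfl⟩, hi⟩, hmin⟩ := Set.exists_min_image _ id hfin ⟨f i₀, ⟨i₀, rfl⟩, hi₀⟩
  refine ⟨i, le_antisymm (le_iInf fun j => ?_) (iInf_le f i)⟩
  by_cases hj : f j < c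
  · exact hmin _ ⟨⟨j, rfl⟩, hj⟩
  · exact (hi.trans_le (not_lt.1 hj)).le

theorem Int.card_Icc_ceil_floor_le {a b : ℝ} (h : a ≤ b + 1) :
    ((Finset.Icc ⌈a⌉ ⌊b⌋).card : ℝ) ≤ b - a + 1 := by
  rw [Int.card_Icc]
  rcases le_or_gt 0 (⌊b⌋ + 1 - ⌈a⌉) with h' | h'
  · rw [← Int.cast_natCast, Int.toNat_of_nonneg h']
    push_cast
    linarith [Int.floor_le b, Int.le_ceil a]
  · rw [Int.toNat_eq_zero.2 h'.le, Nat.cast_zero]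
    linarith

namespace SPTG

def AllUrgent (G : SPTG) : Prop := ∀ ℓ : G.Loc, ¬G.isFin ℓ → G.isUrg ℓ

section Plays

variable {G : SPTG}

theorem AllUrgent.delay_eq_zero (hG : G.AllUrgent) {s : G.Conf} {m : G.Move}
    (h : G.canMove s m) : m.t = 0 :=
  h.2.2.2 (hG _ (G.trans_not_fin _ _ h.2.2.1))

theorem not_isFin_of_trans {ℓ ℓ' : G.Loc} (h : G.trans ℓ ℓ') : ¬G.isFin ℓ :=
  G.trans_not_fin ℓ ℓ' h

theorem deadlock_of_isFin {s : G.Conf} (h : G.isFin s.1) : G.deadlock s :=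
  fun ⟨_, hm⟩ => not_isFin_of_trans hm.2.2.1 h

theorem isMax_of_not_isMin {ℓ : G.Loc} (hmin : ¬G.isMin ℓ) (hfin : ¬G.isFin ℓ) : G.isMax ℓ := by
  rcases G.partition ℓ with h | h | h <;> tauto

theorem canMove_zero {s : G.Conf} (hs : s.2 ≤ G.r) {ℓ' : G.Loc} (h : G.trans s.1 ℓ') :
    G.canMove s ⟨0, ℓ'⟩ :=
  ⟨le_rfl, by simpa using hs, h, fun _ => rfl⟩

theorem validConf_endConf {s : G.Conf} {l : List G.Move} (hs : G.validConf s)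
    (hl : G.ValidFrom s l) : G.validConf (G.endConf s l) := by
  induction l generalizing s with
  | nil => exact hs
  | cons m l ih =>
    obtain ⟨ht, hr, -, -⟩ := hl.1
    exact ih ⟨add_nonneg hs.1 ht, hr⟩ hl.2

theorem endConf_append (s : G.Conf) (l : List G.Move) (m : G.Move) :
    G.endConf s (l ++ [m]) = G.applyMove (G.endConf s l) m := by
  simp [endConf]

theorem validFrom_append {s : G.Conf} {l : List G.Move} {m : G.Move} :
    G.ValidFrom s (l ++ [m]) ↔ G.ValidFrom s l ∧ G.canMove (G.endConf s l) m := by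
  induction l generalizing s with
  | nil => simp [ValidFrom, endConf]
  | cons m' l ih =>
    simp only [List.cons_append, ValidFrom, ih]
    exact and_assoc.symm

theorem transWtSum_append (s : G.Conf) (l : List G.Move) (m : G.Move) :
    G.transWtSum s (l ++ [m]) = G.transWtSum s l + G.transWt (G.endConf s l).1 m.tgt := by
  induction l generalizing s with
  | nil => simp [transWtSum, endConf]
  | cons m' l ih =>
    simp only [List.cons_append, transWtSum, ih]
    rw [add_assoc]
    rfl

theorem AllUrgent.finPrice_eq (hG : G.AllUrgent) {s : G.Conf} {l : List G.Move}
    (hl : G.ValidFrom s l) (hfin : G.isFin (G.endConf s l).1) :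
    G.finPrice s l = G.transWtSum s l + G.finalCost (G.endConf s l).1 s.2 := by
  induction l generalizing s with
  | nil => simp_all [finPrice, transWtSum, endConf]
  | cons m l ih =>
    rw [finPrice, transWtSum, ih hl.2 hfin]
    simp [moveCost, applyMove, hG.delay_eq_zero hl.1, endConf]
    ring

section Strategies

variable (σmin : MinStrategy G) (σmax : MaxStrategy G)

theorem step_cases {s : G.Conf} {l : List G.Move} (hs : G.validConf s) (hl : G.ValidFrom s l) :
    (G.deadlock (G.endConf s l) ∧ G.step σmin σmax s l = l) ∨
    ∃ m, G.canMove (G.endConf s l) m ∧ G.step σmin σmax s l = l ++ [m] ∧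
      (G.isMin (G.endConf s l).1 → σmin.move s l = some m) ∧
      (¬G.isMin (G.endConf s l).1 → σmax.move s l = some m) := by
  by_cases hd : G.deadlock (G.endConf s l)
  · exact .inl ⟨hd, if_pos hd⟩
  right
  by_cases hmin : G.isMin (G.endConf s l).1
  · obtain ⟨m, hm, hcan⟩ := σmin.legal s l hs hl hmin hd
    exact ⟨m, hcan, by simp [step, hd, hmin, hm], fun _ => hm, absurd hmin⟩
  · have hmax := isMax_of_not_isMin hmin fun hfin => hd (deadlock_of_isFin hfin)
    obtain ⟨m, hm, hcan⟩ := σmax.legal s l hs hl hmax hd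
    exact ⟨m, hcan, by simp [step, hd, hmin, hm], (absurd · hmin), fun _ => hm⟩

theorem hist_succ (s : G.Conf) (k : ℕ) :
    G.hist σmin σmax s (k + 1) = G.step σmin σmax s (G.hist σmin σmax s k) := rfl

theorem validFrom_hist {s : G.Conf} (hs : G.validConf s) (k : ℕ) :
    G.ValidFrom s (G.hist σmin σmax s k) := by
  induction k with
  | zero => trivial
  | succ k ih =>
    rcases G.step_cases σmin σmax hs ih with ⟨-, h⟩ | ⟨m, hcan, h, -⟩
    · rwa [hist_succ, h]
    · rw [hist_succ, h]
      exact validFrom_append.2 ⟨ih, hcan⟩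

theorem hist_induction {s : G.Conf} (hs : G.validConf s) {P : List G.Move → Prop} (h0 : P [])
    (hstep : ∀ l m, G.canMove (G.endConf s l) m →
      (G.isMin (G.endConf s l).1 → σmin.move s l = some m) →
      (¬G.isMin (G.endConf s l).1 → σmax.move s l = some m) → P l → P (l ++ [m]))
    (k : ℕ) : P (G.hist σmin σmax s k) := by
  induction k with
  | zero => exact h0
  | succ k ih =>
    rcases G.step_cases σmin σmax hs (G.validFrom_hist σmin σmax hs k) with
      ⟨-, h⟩ | ⟨m, hcan, h, hmin, hmax⟩
    · rwa [hist_succ, h]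
    · rw [hist_succ, h]
      exact hstep _ m hcan hmin hmax ih

end Strategies

theorem playCost_eq_top {s : G.Conf} {σmin : MinStrategy G} {σmax : MaxStrategy G}
    (h : ¬∃ k, G.isFin (G.endConf s (G.hist σmin σmax s k)).1) :
    G.playCost s σmin σmax = ⊤ :=
  dif_neg h

theorem AllUrgent.exists_playCost_eq (hG : G.AllUrgent) {s : G.Conf} (hs : G.validConf s)
    {σmin : MinStrategy G} {σmax : MaxStrategy G}
    (h : ∃ k, G.isFin (G.endConf s (G.hist σmin σmax s k)).1) :
    ∃ k, G.isFin (G.endConf s (G.hist σmin σmax s k)).1 ∧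
      G.playCost s σmin σmax = ((G.transWtSum s (G.hist σmin σmax s k) : ℝ) : EReal) +
        (G.finalCost (G.endConf s (G.hist σmin σmax s k)).1 s.2 : EReal) := by
  refine ⟨Nat.find h, Nat.find_spec h, ?_⟩
  rw [playCost, dif_pos h, hG.finPrice_eq (G.validFrom_hist σmin σmax hs _) (Nat.find_spec h),
    EReal.coe_add]

variable (G) in
def immediateMove (next : ∀ ℓ : G.Loc, (∃ ℓ', G.trans ℓ ℓ') → G.Loc) (ℓ : G.Loc) :
    Option G.Move :=
  if h : ∃ ℓ', G.trans ℓ ℓ' then some ⟨0, next ℓ h⟩ else none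

variable {next : ∀ ℓ : G.Loc, (∃ ℓ', G.trans ℓ ℓ') → G.Loc}

theorem exists_immediateMove_eq (hnext : ∀ ℓ h, G.trans ℓ (next ℓ h)) {s : G.Conf}
    (hs : ¬G.deadlock s) : ∃ m, G.immediateMove next s.1 = some m ∧ G.canMove s m := by
  obtain ⟨m, hm⟩ := not_not.1 hs
  have h : ∃ ℓ', G.trans s.1 ℓ' := ⟨m.tgt, hm.2.2.1⟩
  exact ⟨_, dif_pos h, canMove_zero ((le_add_of_nonneg_right hm.1).trans hm.2.1) (hnext _ h)⟩

theorem tgt_of_immediateMove_eq {ℓ : G.Loc} {m : G.Move}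
    (hm : G.immediateMove next ℓ = some m) : ∃ h, m.tgt = next ℓ h := by
  unfold immediateMove at hm
  split_ifs at hm with h
  exact ⟨h, by cases hm; rfl⟩

end Plays

section ValueIteration

variable (G : SPTG) (ν : ℝ)

def bellman (V : G.Loc → EReal) (ℓ : G.Loc) : EReal :=
  if G.isFin ℓ then (G.finalCost ℓ ν : EReal)
  else if G.isMin ℓ then ⨅ p : {ℓ' // G.trans ℓ ℓ'}, ((G.transWt ℓ p : ℝ) : EReal) + V p
  -- a non-final deadlock costs `+∞`, whereas the empty supremum would be `⊥`
  else if ∃ ℓ', G.trans ℓ ℓ' then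
    ⨆ p : {ℓ' // G.trans ℓ ℓ'}, ((G.transWt ℓ p : ℝ) : EReal) + V p
  else ⊤

def valIter : ℕ → G.Loc → EReal
  | 0, ℓ => if G.isFin ℓ then (G.finalCost ℓ ν : EReal) else ⊤
  | n + 1, ℓ => G.bellman ν (valIter n) ℓ

def valLim (ℓ : G.Loc) : EReal := ⨅ n, G.valIter ν n ℓ

variable {G ν} {V : G.Loc → EReal} {ℓ ℓ' : G.Loc}

theorem bellman_of_isFin (h : G.isFin ℓ) (V : G.Loc → EReal) :
    G.bellman ν V ℓ = G.finalCost ℓ ν := if_pos h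

theorem bellman_of_deadlock (hfin : ¬G.isFin ℓ) (h : ¬∃ ℓ', G.trans ℓ ℓ') (V : G.Loc → EReal) :
    G.bellman ν V ℓ = ⊤ := by
  have : IsEmpty {ℓ' // G.trans ℓ ℓ'} := ⟨fun p => h ⟨p, p.2⟩⟩
  by_cases hmin : G.isMin ℓ <;> simp [bellman, hfin, hmin, h]

theorem bellman_mono : Monotone (G.bellman ν) := fun V W h ℓ => by
  unfold bellman
  split_ifs
  · exact le_rfl
  · exact iInf_mono fun p => add_le_add_right (h p) _
  · exact iSup_mono fun p => add_le_add_right (h p) _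
  · exact le_rfl

theorem bellman_le_add (hmin : G.isMin ℓ) (h : G.trans ℓ ℓ') :
    G.bellman ν V ℓ ≤ ((G.transWt ℓ ℓ' : ℝ) : EReal) + V ℓ' := by
  rw [bellman, if_neg (not_isFin_of_trans h), if_pos hmin]
  exact iInf_le (fun p : {ℓ' // G.trans ℓ ℓ'} => ((G.transWt ℓ p : ℝ) : EReal) + V p) ⟨ℓ', h⟩

theorem add_le_bellman (hmin : ¬G.isMin ℓ) (h : G.trans ℓ ℓ') :
    ((G.transWt ℓ ℓ' : ℝ) : EReal) + V ℓ' ≤ G.bellman ν V ℓ := by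
  rw [bellman, if_neg (not_isFin_of_trans h), if_neg hmin, if_pos ⟨ℓ', h⟩]
  exact le_iSup (fun p : {ℓ' // G.trans ℓ ℓ'} => ((G.transWt ℓ p : ℝ) : EReal) + V p) ⟨ℓ', h⟩

theorem exists_bellman_eq (V : G.Loc → EReal) (h : ∃ ℓ', G.trans ℓ ℓ') :
    ∃ ℓ', G.trans ℓ ℓ' ∧ G.bellman ν V ℓ = ((G.transWt ℓ ℓ' : ℝ) : EReal) + V ℓ' := by
  obtain ⟨ℓ₀, h₀⟩ := h
  have : Nonempty {ℓ' // G.trans ℓ ℓ'} := ⟨⟨ℓ₀, h₀⟩⟩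
  rw [bellman, if_neg (not_isFin_of_trans h₀)]
  split_ifs with _ hsucc
  · obtain ⟨p, hp⟩ := exists_eq_ciInf_of_finite
      (f := fun p : {ℓ' // G.trans ℓ ℓ'} => ((G.transWt ℓ p : ℝ) : EReal) + V p)
    exact ⟨p, p.2, hp.symm⟩
  · obtain ⟨p, hp⟩ := exists_eq_ciSup_of_finite
      (f := fun p : {ℓ' // G.trans ℓ ℓ'} => ((G.transWt ℓ p : ℝ) : EReal) + V p)
    exact ⟨p, p.2, hp.symm⟩
  · exact absurd ⟨ℓ₀, h₀⟩ hsucc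

variable (G ν) in
def bestSucc (V : G.Loc → EReal) (ℓ : G.Loc) (h : ∃ ℓ', G.trans ℓ ℓ') : G.Loc :=
  (exists_bellman_eq (ν := ν) V h).choose

theorem trans_bestSucc (h : ∃ ℓ', G.trans ℓ ℓ') : G.trans ℓ (G.bestSucc ν V ℓ h) :=
  (exists_bellman_eq V h).choose_spec.1

theorem bellman_eq_bestSucc (h : ∃ ℓ', G.trans ℓ ℓ') :
    G.bellman ν V ℓ =
      ((G.transWt ℓ (G.bestSucc ν V ℓ h) : ℝ) : EReal) + V (G.bestSucc ν V ℓ h) :=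
  (exists_bellman_eq V h).choose_spec.2

theorem bellman_iInf {V : ℕ → G.Loc → EReal} (hV : Antitone V) :
    G.bellman ν (⨅ n, V n) = ⨅ n, G.bellman ν (V n) := by
  ext ℓ
  simp only [iInf_apply, bellman]
  split_ifs
  · exact iInf_const.symm
  · simp only [EReal.coe_add_iInf]
    exact iInf_comm
  · simp only [EReal.coe_add_iInf]
    exact (iInf_iSup_of_antitone (f := fun (p : {ℓ' // G.trans ℓ ℓ'}) n =>
      ((G.transWt ℓ p : ℝ) : EReal) + V n p) fun p _ _ hmn => add_le_add_right (hV hmn p) _).symm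
  · exact iInf_const.symm

theorem valIter_of_isFin (h : G.isFin ℓ) (n : ℕ) : G.valIter ν n ℓ = G.finalCost ℓ ν := by
  cases n with
  | zero => exact if_pos h
  | succ n => exact bellman_of_isFin h _

theorem valIter_zero_of_not_isFin (h : ¬G.isFin ℓ) : G.valIter ν 0 ℓ = ⊤ := if_neg h

theorem valIter_of_deadlock (hfin : ¬G.isFin ℓ) (h : ¬∃ ℓ', G.trans ℓ ℓ') (n : ℕ) :
    G.valIter ν n ℓ = ⊤ := by
  cases n with
  | zero => exact valIter_zero_of_not_isFin hfin
  | succ n => exact bellman_of_deadlock hfin h _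

theorem antitone_valIter : Antitone (G.valIter ν) := by
  refine antitone_nat_of_succ_le fun n => ?_
  induction n with
  | zero =>
    intro ℓ
    by_cases h : G.isFin ℓ
    · rw [valIter_of_isFin h, valIter_of_isFin h]
    · exact (valIter_zero_of_not_isFin h).symm ▸ le_top
  | succ n ih => exact bellman_mono ih

theorem valLim_le_valIter (n : ℕ) (ℓ : G.Loc) : G.valLim ν ℓ ≤ G.valIter ν n ℓ := iInf_le _ n

theorem valLim_of_isFin (h : G.isFin ℓ) : G.valLim ν ℓ = G.finalCost ℓ ν := by
  simp [valLim, valIter_of_isFin h]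

theorem bellman_valLim : G.bellman ν (G.valLim ν) = G.valLim ν := by
  have hlim : G.valLim ν = ⨅ n, G.valIter ν n := funext fun ℓ => (iInf_apply ..).symm
  rw [hlim, bellman_iInf antitone_valIter]
  refine le_antisymm (le_iInf fun n => ?_) (le_iInf fun n => iInf_le _ (n + 1))
  exact (iInf_le _ n).trans (antitone_valIter n.le_succ)

end ValueIteration

section Discreteness

variable {G : SPTG} {ν : ℝ} {ℓ : G.Loc}

theorem int_add_mem_Zstar {x : ℝ} (hx : x ∈ G.Zstar ν) (k : ℤ) : (k : ℝ) + x ∈ G.Zstar ν := by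
  obtain ⟨k', ℓf, hf, rfl⟩ := hx
  exact ⟨k + k', ℓf, hf, by push_cast; ring⟩

theorem finalCost_mem_Zstar (h : G.isFin ℓ) : G.finalCost ℓ ν ∈ G.Zstar ν :=
  ⟨0, ℓ, h, by simp⟩

theorem valIter_eq_top_or_mem_Zstar (n : ℕ) (ℓ : G.Loc) :
    G.valIter ν n ℓ = ⊤ ∨ ∃ x ∈ G.Zstar ν, G.valIter ν n ℓ = x := by
  by_cases hfin : G.isFin ℓ
  · exact .inr ⟨_, finalCost_mem_Zstar hfin, valIter_of_isFin hfin n⟩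
  cases n with
  | zero => exact .inl (valIter_zero_of_not_isFin hfin)
  | succ n =>
    by_cases hsucc : ∃ ℓ', G.trans ℓ ℓ'
    · obtain ⟨ℓ', -, h⟩ := exists_bellman_eq (ν := ν) (G.valIter ν n) hsucc
      change G.bellman ν (G.valIter ν n) ℓ = ⊤ ∨ ∃ x ∈ G.Zstar ν, G.bellman ν _ ℓ = x
      rw [h]
      rcases valIter_eq_top_or_mem_Zstar n ℓ' with h' | ⟨x, hx, h'⟩
      · exact .inl (by rw [h', EReal.coe_add_top])
      · exact .inr ⟨_, int_add_mem_Zstar hx _, by rw [h', EReal.coe_add]⟩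
    · exact .inl (valIter_of_deadlock hfin hsucc _)

variable (G ν) in
def zstarIcc (a b : ℝ) : Finset ℝ :=
  Finset.univ.biUnion fun ℓf : {ℓ' : G.Loc // G.isFin ℓ'} =>
    (Finset.Icc ⌈a - G.finalCost ℓf ν⌉ ⌊b - G.finalCost ℓf ν⌋).image
      fun z : ℤ => (z : ℝ) + G.finalCost ℓf ν

theorem Zstar_inter_Icc_subset (a b : ℝ) : G.Zstar ν ∩ Set.Icc a b ⊆ G.zstarIcc ν a b := by
  rintro _ ⟨⟨k, ℓf, hf, rfl⟩, ha, hb⟩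
  refine Finset.mem_biUnion.2 ⟨⟨ℓf, hf⟩, Finset.mem_univ _, Finset.mem_image.2 ⟨k, ?_, rfl⟩⟩
  exact Finset.mem_Icc.2 ⟨Int.ceil_le.2 (by linarith), Int.le_floor.2 (by linarith)⟩

theorem card_zstarIcc_le {a b : ℝ} (h : a ≤ b + 1) :
    ((G.zstarIcc ν a b).card : ℝ) ≤ Nat.card {ℓ' : G.Loc // G.isFin ℓ'} * (b - a + 1) := by
  refine (Nat.cast_le.2 Finset.card_biUnion_le).trans ?_
  push_cast
  refine (Finset.sum_le_sum fun ℓf _ => (Nat.cast_le.2 Finset.card_image_le).trans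
    (Int.card_Icc_ceil_floor_le (by linarith))).trans ?_
  simp_rw [sub_sub_sub_cancel_right]
  rw [Finset.sum_const, Finset.card_univ, nsmul_eq_mul, Nat.card_eq_fintype_card]

theorem exists_valIter_eq_valLim (htop : G.valLim ν ℓ ≠ ⊤) (hbot : G.valLim ν ℓ ≠ ⊥) :
    ∃ n, G.valIter ν n ℓ = G.valLim ν ℓ := by
  set x := (G.valLim ν ℓ).toReal
  have hx : G.valLim ν ℓ = x := (EReal.coe_toReal htop hbot).symm
  refine exists_eq_iInf_of_finite_lt (c := ((x + 1 : ℝ) : EReal))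
    (by rw [valLim] at hx; rw [hx, EReal.coe_lt_coe_iff]; linarith) ?_
  refine (((G.zstarIcc ν x (x + 1)).finite_toSet.subset (Zstar_inter_Icc_subset x (x + 1))).image
    ((↑) : ℝ → EReal)).subset ?_
  rintro _ ⟨⟨n, rfl⟩, hn : G.valIter ν n ℓ < _⟩
  have hge := hx ▸ valLim_le_valIter (ν := ν) n ℓ
  rcases valIter_eq_top_or_mem_Zstar (ν := ν) n ℓ with h | ⟨y, hy, h⟩
  · exact absurd (h ▸ hn) (by simp)
  · simp only [h] at hn hge ⊢
    exact ⟨y, ⟨hy, EReal.coe_le_coe_iff.1 hge, (EReal.coe_lt_coe_iff.1 hn).le⟩, rfl⟩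

end Discreteness

section Weights

variable {G : SPTG} {ν : ℝ} {ℓ : G.Loc}

theorem abs_transWt_le_wT {ℓ ℓ' : G.Loc} (h : G.trans ℓ ℓ') :
    |(G.transWt ℓ ℓ' : ℝ)| ≤ G.wT := by
  have := le_ciSup (Set.finite_range fun p : G.Loc × G.Loc =>
    if G.trans p.1 p.2 then |(G.transWt p.1 p.2 : ℝ)| else 0).bddAbove (ℓ, ℓ')
  rwa [if_pos h] at this

theorem wT_nonneg : 0 ≤ G.wT := Real.iSup_nonneg fun _ => by split_ifs <;> positivity

theorem wF_nonneg : 0 ≤ G.wF := Real.iSup_nonneg fun _ => by split_ifs <;> positivity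

theorem abs_finalCost_le_wF (h : G.isFin ℓ) (hν0 : 0 ≤ ν) (hνr : ν ≤ G.r) :
    |G.finalCost ℓ ν| ≤ G.wF := by
  have hmax : |G.finalCost ℓ ν| ≤ max |G.finalCost ℓ 0| |G.finalCost ℓ G.r| := by
    simp only [finalCost]
    rcases le_total 0 (G.finSlope ℓ) with hs | hs
    · exact abs_le_max_abs_abs (by nlinarith) (by nlinarith)
    · rw [max_comm]
      exact abs_le_max_abs_abs (by nlinarith) (by nlinarith)
  have := le_ciSup (Set.finite_range fun ℓ' : G.Loc =>
    if G.isFin ℓ' then max |G.finalCost ℓ' 0| |G.finalCost ℓ' G.r| else 0).bddAbove ℓ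
  rw [if_pos h] at this
  exact hmax.trans this

end Weights

section Descent

variable {G : SPTG} {ν : ℝ} {ℓ : G.Loc}

variable (G ν) in
def rank (ℓ : G.Loc) : ℕ := sInf {n | G.valIter ν n ℓ = G.valLim ν ℓ}

theorem exists_succ_valLim_eq {M : ℕ} (hfin : ¬G.isFin ℓ)
    (hM : G.valIter ν (M + 1) ℓ = G.valLim ν ℓ) (htop : G.valLim ν ℓ ≠ ⊤) :
    ∃ ℓ', G.trans ℓ ℓ' ∧ G.valLim ν ℓ = ((G.transWt ℓ ℓ' : ℝ) : EReal) + G.valLim ν ℓ' ∧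
      G.valIter ν M ℓ' = G.valLim ν ℓ' := by
  have hsucc : ∃ ℓ', G.trans ℓ ℓ' := by
    by_contra h
    exact htop (hM ▸ valIter_of_deadlock hfin h _)
  have hfix := congrFun (bellman_valLim (G := G) (ν := ν)) ℓ
  obtain ⟨ℓ', hℓ', heq, hle⟩ : ∃ ℓ', G.trans ℓ ℓ' ∧
      G.valLim ν ℓ = ((G.transWt ℓ ℓ' : ℝ) : EReal) + G.valLim ν ℓ' ∧
      ((G.transWt ℓ ℓ' : ℝ) : EReal) + G.valIter ν M ℓ' ≤ G.valLim ν ℓ := by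
    by_cases hmin : G.isMin ℓ
    · obtain ⟨ℓ', hℓ', h⟩ := exists_bellman_eq (ν := ν) (G.valIter ν M) hsucc
      have h1 := hM.symm.trans h
      refine ⟨ℓ', hℓ', le_antisymm ?_ ?_, h1.ge⟩
      · exact hfix ▸ bellman_le_add hmin hℓ'
      · exact h1 ▸ add_le_add_right (valLim_le_valIter M ℓ') _
    · obtain ⟨ℓ', hℓ', h⟩ := exists_bellman_eq (ν := ν) (G.valLim ν) hsucc
      exact ⟨ℓ', hℓ', hfix.symm.trans h, hM ▸ add_le_bellman hmin hℓ'⟩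
  exact ⟨ℓ', hℓ', heq, le_antisymm (EReal.addLECancellable_coe _ (heq ▸ hle))
    (valLim_le_valIter M ℓ')⟩

/-- Along the path generated by `exists_succ_valLim_eq` the rank strictly decreases, so its
transitions are charged to distinct locations of smaller rank than the start. -/
theorem exists_valLim_eq_int_add (htop : G.valLim ν ℓ ≠ ⊤) (hbot : G.valLim ν ℓ ≠ ⊥) :
    ∃ z : ℤ, ∃ ℓf, G.isFin ℓf ∧
      |(z : ℝ)| ≤ (Finset.univ.filter fun ℓ' => G.rank ν ℓ' < G.rank ν ℓ).card * G.wT ∧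
      G.valLim ν ℓ = ((z + G.finalCost ℓf ν : ℝ) : EReal) := by
  induction hr : G.rank ν ℓ using Nat.strong_induction_on generalizing ℓ with
  | _ r ih =>
  by_cases hfin : G.isFin ℓ
  · exact ⟨0, ℓ, hfin, by simpa using mul_nonneg (Nat.cast_nonneg _) wT_nonneg,
      by simp [valLim_of_isFin hfin]⟩
  obtain ⟨n, hn⟩ := exists_valIter_eq_valLim htop hbot
  have hrank : G.valIter ν r ℓ = G.valLim ν ℓ :=
    hr ▸ Nat.sInf_mem (s := {n | G.valIter ν n ℓ = G.valLim ν ℓ}) ⟨n, hn⟩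
  obtain ⟨M, rfl⟩ : ∃ M, r = M + 1 := Nat.exists_eq_succ_of_ne_zero fun h =>
    htop (by rw [← hrank, h, valIter_zero_of_not_isFin hfin])
  obtain ⟨ℓ', hℓ', heq, hM⟩ := exists_succ_valLim_eq hfin hrank htop
  have hlt : G.rank ν ℓ' < M + 1 := Nat.lt_succ_of_le (Nat.sInf_le hM)
  obtain ⟨z, ℓf, hf, hz, hval⟩ := ih _ hlt
    (fun h => htop (by rw [heq, h, EReal.coe_add_top]))
    (fun h => hbot (by rw [heq, h, EReal.add_bot])) rfl
  refine ⟨G.transWt ℓ ℓ' + z, ℓf, hf, ?_,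
    by rw [heq, hval, ← EReal.coe_add, Int.cast_add, add_assoc]⟩
  set below := fun m => Finset.univ.filter fun ℓ'' => G.rank ν ℓ'' < m
  have hsub : insert ℓ' (below (G.rank ν ℓ')) ⊆ below (M + 1) := by
    intro x hx
    simp only [below, Finset.mem_insert, Finset.mem_filter, Finset.mem_univ, true_and] at hx ⊢
    rcases hx with rfl | hx
    · exact hlt
    · exact hx.trans hlt
  have hcard := Finset.card_le_card hsub
  rw [Finset.card_insert_of_notMem (by simp [below])] at hcard
  calc |((G.transWt ℓ ℓ' + z : ℤ) : ℝ)| ≤ |(G.transWt ℓ ℓ' : ℝ)| + |(z : ℝ)| := by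
        push_cast; exact abs_add_le _ _
    _ ≤ G.wT + (below (G.rank ν ℓ')).card * G.wT := add_le_add (abs_transWt_le_wT hℓ') hz
    _ = ((below (G.rank ν ℓ')).card + 1 : ℕ) * G.wT := by push_cast; ring
    _ ≤ (below (M + 1)).card * G.wT := by gcongr; exact wT_nonneg

theorem valLim_mem_Poss (hν0 : 0 ≤ ν) (hνr : ν ≤ G.r) (htop : G.valLim ν ℓ ≠ ⊤)
    (hbot : G.valLim ν ℓ ≠ ⊥) : ∃ x ∈ G.Poss ν, G.valLim ν ℓ = x := by
  obtain ⟨z, ℓf, hf, hz, hval⟩ := exists_valLim_eq_int_add htop hbot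
  have hcard : ((Finset.univ.filter fun ℓ' => G.rank ν ℓ' < G.rank ν ℓ).card : ℝ) ≤
      Fintype.card G.Loc - 1 := by
    rw [le_sub_iff_add_le]
    exact_mod_cast Finset.card_lt_univ_of_notMem (x := ℓ) (by simp)
  have hz' := hz.trans (mul_le_mul_of_nonneg_right hcard wT_nonneg)
  have hφ := abs_finalCost_le_wF hf hν0 hνr
  rw [abs_le] at hz' hφ
  exact ⟨_, ⟨⟨z, ℓf, hf, rfl⟩, by linarith, by linarith⟩, hval⟩

end Descent

section OptimalStrategies

variable (G : SPTG) (ν : ℝ)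

def maxStrategy : MaxStrategy G where
  move s l := G.immediateMove (G.bestSucc ν (G.valLim ν)) (G.endConf s l).1
  legal _ _ _ _ _ hd := exists_immediateMove_eq (fun _ h => trans_bestSucc h) hd

/-- Min plays optimally in the `n`-step game, the remaining horizon being read off the length
of the history. -/
def minStrategy (n : ℕ) : MinStrategy G where
  move s l := G.immediateMove (G.bestSucc ν (G.valIter ν (n - l.length - 1))) (G.endConf s l).1
  legal _ _ _ _ _ hd := exists_immediateMove_eq (fun _ h => trans_bestSucc h) hd

variable {G ν} {ℓ : G.Loc}

theorem coe_transWtSum_append_add (s : G.Conf) (l : List G.Move) (m : G.Move) (x : EReal) :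
    ((G.transWtSum s (l ++ [m]) : ℝ) : EReal) + x = ((G.transWtSum s l : ℝ) : EReal) +
      (((G.transWt (G.endConf s l).1 m.tgt : ℝ) : EReal) + x) := by
  rw [transWtSum_append, Int.cast_add, EReal.coe_add, add_assoc]

theorem valLim_le_transWtSum_add_valLim (hs : G.validConf (ℓ, ν)) (σmin : MinStrategy G)
    (k : ℕ) :
    G.valLim ν ℓ ≤ ((G.transWtSum (ℓ, ν) (G.hist σmin (G.maxStrategy ν) (ℓ, ν) k) : ℝ) : EReal) +
      G.valLim ν (G.endConf (ℓ, ν) (G.hist σmin (G.maxStrategy ν) (ℓ, ν) k)).1 := by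
  refine G.hist_induction σmin (G.maxStrategy ν) hs (P := fun l => G.valLim ν ℓ ≤
    ((G.transWtSum (ℓ, ν) l : ℝ) : EReal) + G.valLim ν (G.endConf (ℓ, ν) l).1) ?_
    (fun l m hcan _ hmax ih => ?_) k
  · simp [transWtSum, endConf]
  rw [coe_transWtSum_append_add, endConf_append]
  refine ih.trans (add_le_add_right ?_ _)
  rw [← congrFun bellman_valLim]
  by_cases hm : G.isMin (G.endConf (ℓ, ν) l).1
  · exact bellman_le_add hm hcan.2.2.1
  · obtain ⟨h, ht⟩ := tgt_of_immediateMove_eq (hmax hm)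
    exact ((bellman_eq_bestSucc h).trans (by rw [← ht]; rfl)).le

theorem transWtSum_add_valIter_le (hs : G.validConf (ℓ, ν)) (n : ℕ) (σmax : MaxStrategy G)
    (k : ℕ) :
    ((G.transWtSum (ℓ, ν) (G.hist (G.minStrategy ν n) σmax (ℓ, ν) k) : ℝ) : EReal) +
      G.valIter ν (n - (G.hist (G.minStrategy ν n) σmax (ℓ, ν) k).length)
        (G.endConf (ℓ, ν) (G.hist (G.minStrategy ν n) σmax (ℓ, ν) k)).1 ≤ G.valIter ν n ℓ := by
  refine G.hist_induction (G.minStrategy ν n) σmax hs (P := fun l =>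
    ((G.transWtSum (ℓ, ν) l : ℝ) : EReal) + G.valIter ν (n - l.length) (G.endConf (ℓ, ν) l).1 ≤
      G.valIter ν n ℓ) ?_ (fun l m hcan hmin _ ih => ?_) k
  · simp [transWtSum, endConf]
  rw [coe_transWtSum_append_add, endConf_append, List.length_append, List.length_singleton,
    ← Nat.sub_sub]
  refine (add_le_add_right ?_ _).trans ih
  set e := (G.endConf (ℓ, ν) l).1
  by_cases h0 : n - l.length = 0
  · rw [h0, valIter_zero_of_not_isFin (not_isFin_of_trans hcan.2.2.1)]
    exact le_top
  obtain ⟨j, hj⟩ := Nat.exists_eq_succ_of_ne_zero h0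
  rw [hj, Nat.succ_sub_one]
  show _ ≤ G.bellman ν (G.valIter ν j) e
  by_cases hm : G.isMin e
  · obtain ⟨h, ht⟩ := tgt_of_immediateMove_eq (hmin hm)
    simp only [hj, Nat.succ_sub_one] at ht
    exact ((bellman_eq_bestSucc h).trans (by rw [← ht]; rfl)).ge
  · exact add_le_bellman hm hcan.2.2.1

theorem isFin_or_length_hist_minStrategy (hs : G.validConf (ℓ, ν)) {n : ℕ}
    (htop : G.valIter ν n ℓ ≠ ⊤) (σmax : MaxStrategy G) (k : ℕ) :
    G.isFin (G.endConf (ℓ, ν) (G.hist (G.minStrategy ν n) σmax (ℓ, ν) k)).1 ∨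
      (G.hist (G.minStrategy ν n) σmax (ℓ, ν) k).length = k := by
  induction k with
  | zero => exact .inr rfl
  | succ k ih =>
    have hl := G.validFrom_hist (G.minStrategy ν n) σmax hs k
    rw [hist_succ]
    rcases G.step_cases (G.minStrategy ν n) σmax hs hl with ⟨hd, h⟩ | ⟨m, hcan, h, -⟩
    · rw [h]
      refine .inl (of_not_not fun hfin => htop (top_le_iff.1 ?_))
      have hinv := transWtSum_add_valIter_le hs n σmax k
      rwa [valIter_of_deadlock hfin fun ⟨_, h'⟩ =>
        hd ⟨_, canMove_zero (validConf_endConf hs hl).2 h'⟩, EReal.coe_add_top] at hinv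
    · rw [h, List.length_append, List.length_singleton]
      exact .inr (by rw [ih.resolve_left (not_isFin_of_trans hcan.2.2.1)])

theorem exists_isFin_hist_minStrategy (hs : G.validConf (ℓ, ν)) {n : ℕ}
    (htop : G.valIter ν n ℓ ≠ ⊤) (σmax : MaxStrategy G) :
    ∃ k, G.isFin (G.endConf (ℓ, ν) (G.hist (G.minStrategy ν n) σmax (ℓ, ν) k)).1 := by
  refine ⟨n + 1, (isFin_or_length_hist_minStrategy hs htop σmax _).elim id fun hlen => ?_⟩
  by_contra hfin
  have hinv := transWtSum_add_valIter_le hs n σmax (n + 1)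
  rw [hlen, Nat.sub_eq_zero_of_le n.le_succ, valIter_zero_of_not_isFin hfin,
    EReal.coe_add_top, top_le_iff] at hinv
  exact htop hinv

theorem AllUrgent.playCost_minStrategy_le (hG : G.AllUrgent) (hs : G.validConf (ℓ, ν)) (n : ℕ)
    (σmax : MaxStrategy G) : G.playCost (ℓ, ν) (G.minStrategy ν n) σmax ≤ G.valIter ν n ℓ := by
  by_cases htop : G.valIter ν n ℓ = ⊤
  · exact htop ▸ le_top
  obtain ⟨k, hfin, hk⟩ := hG.exists_playCost_eq hs (exists_isFin_hist_minStrategy hs htop σmax)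
  have hinv := transWtSum_add_valIter_le hs n σmax k
  rwa [valIter_of_isFin hfin, ← hk] at hinv

theorem AllUrgent.valLim_le_playCost_maxStrategy (hG : G.AllUrgent) (hs : G.validConf (ℓ, ν))
    (σmin : MinStrategy G) : G.valLim ν ℓ ≤ G.playCost (ℓ, ν) σmin (G.maxStrategy ν) := by
  by_cases h : ∃ k, G.isFin (G.endConf (ℓ, ν) (G.hist σmin (G.maxStrategy ν) (ℓ, ν) k)).1
  · obtain ⟨k, hfin, hk⟩ := hG.exists_playCost_eq hs h
    have hinv := valLim_le_transWtSum_add_valLim hs σmin k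
    rwa [valLim_of_isFin hfin, ← hk] at hinv
  · exact (playCost_eq_top h).symm ▸ le_top

theorem AllUrgent.val_eq_valLim (hG : G.AllUrgent) (hs : G.validConf (ℓ, ν)) :
    G.val ℓ ν = G.valLim ν ℓ :=
  le_antisymm
    (le_iInf fun n => iInf_le_of_le (G.minStrategy ν n)
      (iSup_le (hG.playCost_minStrategy_le hs n)))
    (le_iInf fun σmin => (hG.valLim_le_playCost_maxStrategy hs σmin).trans
      (le_iSup (G.playCost (ℓ, ν) σmin) (G.maxStrategy ν)))

end OptimalStrategies

section Poss

variable {G : SPTG} {ν : ℝ}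

theorem Poss_subset_zstarIcc :
    G.Poss ν ⊆ G.zstarIcc ν (-(((Fintype.card G.Loc : ℝ) - 1) * G.wT + G.wF))
      (((Fintype.card G.Loc : ℝ) - 1) * G.wT + G.wF) :=
  fun _ hx => Zstar_inter_Icc_subset _ _ ⟨hx.1, hx.2.1, hx.2.2⟩

theorem finite_Poss : (G.Poss ν).Finite :=
  (Finset.finite_toSet _).subset Poss_subset_zstarIcc

theorem ncard_Poss_le [Nonempty G.Loc] :
    ((G.Poss ν).ncard : ℝ) ≤ Nat.card {ℓ' : G.Loc // G.isFin ℓ'} *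
      (2 * ((Fintype.card G.Loc : ℝ) - 1) * G.wT + 2 * G.wF + 1) := by
  have hB : 0 ≤ ((Fintype.card G.Loc : ℝ) - 1) * G.wT + G.wF :=
    add_nonneg (mul_nonneg (sub_nonneg.2 (by exact_mod_cast Fintype.card_pos)) wT_nonneg)
      wF_nonneg
  calc ((G.Poss ν).ncard : ℝ)
      ≤ (G.zstarIcc ν (-(((Fintype.card G.Loc : ℝ) - 1) * G.wT + G.wF))
          (((Fintype.card G.Loc : ℝ) - 1) * G.wT + G.wF)).card := by
        rw [← Set.ncard_coe_finset]
        exact_mod_cast Set.ncard_le_ncard Poss_subset_zstarIcc (Finset.finite_toSet _)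
    _ ≤ _ := card_zstarIcc_le (by linarith)
    _ = _ := by ring

end Poss

end SPTG

open SPTG in
theorem urgent_possible_values_general (G : SPTG)
    (hurg : ∀ ℓ : G.Loc, ¬G.isFin ℓ → G.isUrg ℓ)
    (ℓ : G.Loc) (ν : ℝ) (hν0 : 0 ≤ ν) (hνr : ν ≤ G.r) :
    (G.val ℓ ν = ⊤ ∨ G.val ℓ ν = ⊥ ∨ ∃ x ∈ G.Poss ν, G.val ℓ ν = (x : EReal)) ∧
    (G.Poss ν).Finite ∧
    ((G.Poss ν).ncard : ℝ) ≤ (Nat.card { ℓ' : G.Loc // G.isFin ℓ' } : ℝ) *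
      (2 * ((Fintype.card G.Loc : ℝ) - 1) * G.wT + 2 * G.wF + 1) := by
  have : Nonempty G.Loc := ⟨ℓ⟩
  refine ⟨?_, finite_Poss, ncard_Poss_le⟩
  rw [AllUrgent.val_eq_valLim hurg ⟨hν0, hνr⟩]
  by_cases htop : G.valLim ν ℓ = ⊤
  · exact .inl htop
  by_cases hbot : G.valLim ν ℓ = ⊥
  · exact .inr (.inl hbot)
  exact .inr (.inr (valLim_mem_Poss hν0 hνr htop hbot))

open SPTG in
/-- **Corollary: possible values.** In an `r`-SPTG with only urgent
(non-final) locations, `Val_G(ℓ,ν) ∈ Poss_ν ∪ {-∞, +∞}`, and `Poss_ν` is finite of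
cardinality at most `|L_Fin|·(2(|L|-1)·w_T + 2·w_F + 1)`. -/
theorem urgent_possible_values (G : SPTG) (hq : ∃ q : ℚ, G.r = (q : ℝ))
    (hrat : G.ratFinal) (hurg : ∀ ℓ : G.Loc, ¬G.isFin ℓ → G.isUrg ℓ)
    (ℓ : G.Loc) (ν : ℝ) (hν0 : 0 ≤ ν) (hνr : ν ≤ G.r) :
    (G.val ℓ ν = ⊤ ∨ G.val ℓ ν = ⊥ ∨ ∃ x ∈ G.Poss ν, G.val ℓ ν = (x : EReal)) ∧
    (G.Poss ν).Finite ∧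
    ((G.Poss ν).ncard : ℝ) ≤ (Nat.card { ℓ' : G.Loc // G.isFin ℓ' } : ℝ) *
      (2 * ((Fintype.card G.Loc : ℝ) - 1) * G.wT + 2 * G.wF + 1) :=
  urgent_possible_values_general G hurg ℓ ν hν0 hνr
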